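/- For a bipartite graph G with vertex bipartition V = V_1 ∪ V_2, the Randić energy is equally split between the two parts: Σ_{v∈V_1} RE_G(v) = Σ_{v∈V_2} RE_G(v) = RE(G)/2. -/

import Mathlib

open Matrix BigOperators Finset
open scoped Classical

/-- `M * Mᴴ` is positive semidefinite. -/
theorem mulConjTranspose_posSemidef {V : Type*} [Fintype V] [DecidableEq V]
    (M : Matrix V V ℝ) : (M * Mᴴ).PosSemidef := by
  simpa using Matrix.posSemidef_conjTranspose_mul_self Mᴴ

/-- The absolute value `|M| = (M M*)^(1/2)` of a matrix. -/
noncomputable def matAbs {V : Type*} [Fintype V] [DecidableEq V]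
    (M : Matrix V V ℝ) : Matrix V V ℝ :=
  (mulConjTranspose_posSemidef M).1.eigenvectorUnitary.1 *
    diagonal ((↑) ∘ (√·) ∘ (mulConjTranspose_posSemidef M).1.eigenvalues) *
    (star (mulConjTranspose_posSemidef M).1.eigenvectorUnitary : Matrix V V ℝ)

lemma core {V : Type*} [Fintype V] [DecidableEq V] (R : Matrix V V ℝ)
    (hR : R.IsHermitian) (s : V → ℝ)
    (hanti : Matrix.diagonal s * R = - (R * Matrix.diagonal s)) :
    ∑ v, s v * matAbs R v v = 0 := by
  set U : Matrix V V ℝ := (hR.eigenvectorUnitary : Matrix V V ℝ)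
  set lam : V → ℝ := hR.eigenvalues with hlam
  have hspec : R = U * Matrix.diagonal lam * star U := by
    have := hR.spectral_theorem
    rwa [RCLike.ofReal_real_eq_id, Function.id_comp] at this
  have hUU : star U * U = 1 := by simp [U]
  have hUU' : U * star U = 1 := by simp [U]
  -- the candidate abs
  set C : Matrix V V ℝ := U * Matrix.diagonal (fun i => |lam i|) * star U with hCdef
  have hCpsd : C.PosSemidef := by
    have : (Matrix.diagonal (fun i => |lam i|)).PosSemidef :=
      Matrix.posSemidef_diagonal_iff.mpr fun i => abs_nonneg _
    have h2 := this.mul_mul_conjTranspose_same U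
    simpa [hCdef, Matrix.mul_assoc, Matrix.star_eq_conjTranspose] using h2
  have hCsq : C ^ 2 = R * Rᴴ := by
    rw [hR.eq]
    rw [pow_two, hCdef, hspec]
    calc (U * Matrix.diagonal (fun i => |lam i|) * star U) *
        (U * Matrix.diagonal (fun i => |lam i|) * star U)
        = U * (Matrix.diagonal (fun i => |lam i|) * ((star U * U) *
            Matrix.diagonal (fun i => |lam i|))) * star U := by
          simp only [Matrix.mul_assoc]
      _ = U * (Matrix.diagonal (fun i => |lam i|) * Matrix.diagonal (fun i => |lam i|)) * star U := by
          rw [hUU, Matrix.one_mul]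
      _ = U * (Matrix.diagonal lam * ((star U * U) * Matrix.diagonal lam)) * star U := by
          rw [hUU, Matrix.one_mul, Matrix.diagonal_mul_diagonal, Matrix.diagonal_mul_diagonal]
          congr 1
          funext i
          simpa using abs_mul_abs_self (lam i)
      _ = (U * Matrix.diagonal lam * star U) * (U * Matrix.diagonal lam * star U) := by
          simp only [Matrix.mul_assoc]
  have hC : matAbs R = C :=
    by
      have hP := mulConjTranspose_posSemidef R
      have h1 : matAbs R = cfc Real.sqrt (R * Rᴴ) := by
        rw [hP.1.cfc_eq, Matrix.IsHermitian.cfc, matAbs]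
        simp [Unitary.conjStarAlgAut_apply, Function.comp_def]
      rw [h1]
      open scoped MatrixOrder in
      have h2 : CFC.sqrt (R * Rᴴ) = C :=
        CFC.sqrt_unique (by rw [← pow_two]; exact hCsq) hCpsd.nonneg
      open scoped MatrixOrder in
      rw [← h2, CFC.sqrt_eq_real_sqrt _ hP.nonneg, cfcₙ_eq_cfc (hf0 := Real.sqrt_zero)]
  -- anticommutation in the eigenbasis
  set M : Matrix V V ℝ := star U * Matrix.diagonal s * U with hMdef
  have hkey : M * Matrix.diagonal lam = - (Matrix.diagonal lam * M) := by
    have h1 : U * (M * Matrix.diagonal lam) * star U = Matrix.diagonal s * R := by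
      rw [hMdef, hspec]
      calc U * (star U * Matrix.diagonal s * U * Matrix.diagonal lam) * star U
          = (U * star U) * Matrix.diagonal s * (U * Matrix.diagonal lam * star U) := by
            simp only [Matrix.mul_assoc]
        _ = Matrix.diagonal s * (U * Matrix.diagonal lam * star U) := by
            rw [hUU', Matrix.one_mul]
    have h2 : U * (Matrix.diagonal lam * M) * star U = R * Matrix.diagonal s := by
      rw [hMdef, hspec]
      calc U * (Matrix.diagonal lam * (star U * Matrix.diagonal s * U)) * star U
          = (U * Matrix.diagonal lam * star U) * Matrix.diagonal s * (U * star U) := by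
            simp only [Matrix.mul_assoc]
        _ = (U * Matrix.diagonal lam * star U) * Matrix.diagonal s := by
            rw [hUU', Matrix.mul_one]
    have h3 : U * (M * Matrix.diagonal lam) * star U =
        U * (- (Matrix.diagonal lam * M)) * star U := by
      rw [h1, hanti, Matrix.mul_neg, Matrix.neg_mul, h2]
    have h4 := congrArg (fun X => star U * X * U) h3
    calc M * Matrix.diagonal lam
        = (star U * U) * (M * Matrix.diagonal lam) * (star U * U) := by
          rw [hUU]; simp
      _ = star U * (U * (M * Matrix.diagonal lam) * star U) * U := by
          simp only [Matrix.mul_assoc]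
      _ = star U * (U * (- (Matrix.diagonal lam * M)) * star U) * U := by rw [h3]
      _ = (star U * U) * (- (Matrix.diagonal lam * M)) * (star U * U) := by
          simp only [Matrix.mul_assoc]
      _ = - (Matrix.diagonal lam * M) := by rw [hUU]; simp
  have hdiagM : ∀ i, lam i ≠ 0 → M i i = 0 := by
    intro i hi
    have := congrFun (congrFun hkey i) i
    rw [Matrix.mul_diagonal, Matrix.neg_apply, Matrix.diagonal_mul] at this
    have h2 : (2 : ℝ) * (lam i * M i i) = 0 := by ring_nf; ring_nf at this; linarith
    rcases mul_eq_zero.mp h2 with h | h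
    · norm_num at h
    · rcases mul_eq_zero.mp h with h | h
      · exact absurd h hi
      · exact h
  -- compute the sum as a trace
  have hsum : ∑ v, s v * matAbs R v v =
      Matrix.trace (Matrix.diagonal s * C) := by
    rw [hC, Matrix.trace]
    congr 1
    funext v
    rw [Matrix.diag_apply, Matrix.diagonal_mul]
  rw [hsum, hCdef, show Matrix.diagonal s * (U * Matrix.diagonal (fun i => |lam i|) * star U)
      = (Matrix.diagonal s * U) * Matrix.diagonal (fun i => |lam i|) * star U by
        simp only [Matrix.mul_assoc],
    Matrix.trace_mul_cycle]
  rw [Matrix.trace]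
  apply Finset.sum_eq_zero
  intro i _
  rw [Matrix.diag_apply, Matrix.mul_diagonal]
  rcases eq_or_ne (lam i) 0 with h | h
  · rw [h]; simp
  · rw [← Matrix.mul_assoc, show star U * Matrix.diagonal s * U = M from rfl,
      hdiagM i h, zero_mul]

/-- The Randić matrix of a simple graph. -/
noncomputable def randicMatrix {V : Type*} [Fintype V] [DecidableEq V]
    (G : SimpleGraph V) : Matrix V V ℝ :=
  Matrix.of fun i j =>
    if G.Adj i j then 1 / Real.sqrt ((G.degree i : ℝ) * (G.degree j : ℝ)) else 0

/-- The Randić energy of a vertex: `RE_G(v) = |R(G)|_{vv}`. -/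
noncomputable def vertexRE {V : Type*} [Fintype V] [DecidableEq V]
    (G : SimpleGraph V) (i : V) : ℝ :=
  matAbs (randicMatrix G) i i

/-- In a bipartite graph, the Randić energy is split equally between the two parts. -/
theorem randic_energy_bipartite_split {V : Type*} [Fintype V] [DecidableEq V]
    (G : SimpleGraph V) (V1 V2 : Finset V) (hdisj : Disjoint V1 V2)
    (hunion : V1 ∪ V2 = Finset.univ)
    (hbip : ∀ i j, G.Adj i j → (i ∈ V1 ↔ j ∈ V2))
    (hdeg : ∀ v, 0 < G.degree v) :
    ∑ v ∈ V1, vertexRE G v = ∑ v ∈ V2, vertexRE G v ∧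
    ∑ v ∈ V1, vertexRE G v = (∑ v, vertexRE G v) / 2 := by
  set R : Matrix V V ℝ := randicMatrix G with hRdef
  have hR : R.IsHermitian := by
    rw [Matrix.IsHermitian]
    ext i j
    by_cases h : G.Adj i j
    · have h' : G.Adj j i := h.symm
      simp [hRdef, randicMatrix, h, h', Matrix.conjTranspose_apply, mul_comm]
    · have h' : ¬ G.Adj j i := fun hh => h hh.symm
      simp [hRdef, randicMatrix, h, h', Matrix.conjTranspose_apply]
  set s : V → ℝ := fun v => if v ∈ V1 then (1 : ℝ) else -1 with hsdef
  have hV2 : ∀ v, v ∈ V2 ↔ v ∉ V1 := by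
    intro v
    constructor
    · intro hv hv1
      exact (Finset.disjoint_left.mp hdisj) hv1 hv
    · intro hv
      have : v ∈ V1 ∪ V2 := hunion ▸ Finset.mem_univ v
      rcases Finset.mem_union.mp this with h | h
      · exact absurd h hv
      · exact h
  have hanti : Matrix.diagonal s * R = - (R * Matrix.diagonal s) := by
    ext i j
    rw [Matrix.diagonal_mul, Matrix.neg_apply, Matrix.mul_diagonal]
    by_cases h : G.Adj i j
    · have hij := hbip i j h
      have hsij : s i = - s j := by
        by_cases h1 : i ∈ V1
        · have : j ∉ V1 := (hV2 j).mp (hij.mp h1)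
          simp [hsdef, h1, this]
        · have hj2 : j ∉ V2 := fun hj => h1 (hij.mpr hj)
          have : j ∈ V1 := by
            have hm : j ∈ V1 ∪ V2 := hunion ▸ Finset.mem_univ j
            rcases Finset.mem_union.mp hm with hh | hh
            · exact hh
            · exact absurd hh hj2
          simp [hsdef, h1, this]
      rw [hsij]; ring
    · have : R i j = 0 := by simp [hRdef, randicMatrix, h]
      rw [this]; ring
  have hzero := core R hR s hanti
  have huniv : (Finset.univ : Finset V) = V1 ∪ V2 := hunion.symm
  have hsum1 : ∀ (f : V → ℝ), ∑ v, f v = ∑ v ∈ V1, f v + ∑ v ∈ V2, f v := by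
    intro f
    rw [huniv, Finset.sum_union hdisj]
  rw [hsum1] at hzero
  have e1 : ∑ v ∈ V1, s v * matAbs R v v = ∑ v ∈ V1, vertexRE G v := by
    apply Finset.sum_congr rfl
    intro v hv
    simp [hsdef, hv, vertexRE, hRdef]
  have e2 : ∑ v ∈ V2, s v * matAbs R v v = - ∑ v ∈ V2, vertexRE G v := by
    rw [← Finset.sum_neg_distrib]
    apply Finset.sum_congr rfl
    intro v hv
    have : v ∉ V1 := (hV2 v).mp hv
    simp [hsdef, this, vertexRE, hRdef]
  rw [e1, e2] at hzero
  have htot : ∑ v, vertexRE G v = ∑ v ∈ V1, vertexRE G v + ∑ v ∈ V2, vertexRE G v :=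
    hsum1 _
  constructor
  · linarith
  · rw [htot]; linarith
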